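/- arXiv:1303.5026 — 3 statements merged into one kernel-verified Lean document; each statement's English description precedes it below -/
import Mathlib

section
/- Let 𝒢 be a connected reductive group over ℂ. For g ∈ 𝒢 let T_g be the identity component of the centre of Z_𝒢(g_s). If g, g' ∈ 𝒢 satisfy g' g⁻¹ ∈ T_g and T_g = T_{g'}, then Z_𝒢(g) = Z_𝒢(g'). -/
open Matrix

variable (n : ℕ)

/-- A connected complex reductive linear group, realized as a closed connected
subgroup of `GL_n(ℂ)` all of whose invariant subspaces of the standard
representation admit invariant complements. -/
def IsConnReductiveSubgroup (G : Subgroup (GL (Fin n) ℂ)) : Prop :=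
  IsClosed (G : Set (GL (Fin n) ℂ)) ∧ IsConnected (G : Set (GL (Fin n) ℂ)) ∧
  ∀ W : Submodule ℂ (Fin n → ℂ),
    (∀ g ∈ G, W.map (Matrix.toLin' (g : Matrix (Fin n) (Fin n) ℂ)) = W) →
    ∃ W' : Submodule ℂ (Fin n → ℂ), IsCompl W W' ∧
      ∀ g ∈ G, W'.map (Matrix.toLin' (g : Matrix (Fin n) (Fin n) ℂ)) = W'

/-- Semisimple = acting diagonalizably on the standard representation. -/
def IsSemisimpleElt (g : GL (Fin n) ℂ) : Prop :=
  Module.End.IsSemisimple (Matrix.toLin' (g : Matrix (Fin n) (Fin n) ℂ))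

/-- Unipotent = `g - 1` is nilpotent. -/
def IsUnipotentElt (g : GL (Fin n) ℂ) : Prop :=
  IsNilpotent ((g : Matrix (Fin n) (Fin n) ℂ) - 1)

/-- The centre of `Z_G(s)`, as a subset of `GL_n(ℂ)`. -/
def centreCentralizer (G : Subgroup (GL (Fin n) ℂ)) (s : GL (Fin n) ℂ) :
    Set (GL (Fin n) ℂ) :=
  {z | (z ∈ G ∧ z * s = s * z) ∧
    ∀ w : GL (Fin n) ℂ, w ∈ G ∧ w * s = s * w → z * w = w * z}

/-- `T_g`: the identity component of the centre of `Z_G(g_s)`. -/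
def Tsub (G : Subgroup (GL (Fin n) ℂ)) (s : GL (Fin n) ℂ) :
    Set (GL (Fin n) ℂ) :=
  connectedComponentIn (centreCentralizer n G s) 1

/-! Elements commuting with `g` commute with `g_s`, because `g_s` is a polynomial in `g`
(uniqueness of the Jordan–Chevalley decomposition). An element `t` of the centre of `Z_𝒢(g_s)`
therefore commutes with all of `Z_𝒢(g)`, so `Z_𝒢(g) ⊆ Z_𝒢(t g)`; with `t = g' g⁻¹` this is
`Z_𝒢(g) ⊆ Z_𝒢(g')`, and `T_g = T_{g'}` gives the reverse inclusion through `g = t⁻¹ g'`. -/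

namespace Module.End

variable {K V : Type*} [Field K] [PerfectField K] [AddCommGroup V] [Module K V]
  [FiniteDimensional K V]

theorem commute_of_isSemisimple_of_isNilpotent_sub {f s z : End K V} (hs : s.IsSemisimple)
    (hfs : Commute f s) (hnil : IsNilpotent (f - s)) (hz : Commute z f) : Commute z s := by
  obtain ⟨n₀, hn₀, s₀, hs₀, hn₀_nil, hs₀_ss, hf⟩ := f.exists_isNilpotent_isSemisimple
  have hs_eq : s = s₀ := by
    refine (isNilpotent_isSemisimple_unique hnil hs hn₀_nil hs₀_ss ?_ ?_ ?_).2
    · exact hfs.sub_left (Commute.refl s)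
    · exact Algebra.commute_of_mem_adjoin_singleton_of_commute hs₀
        (Algebra.commute_of_mem_adjoin_self hn₀).symm
    · rw [← hf, sub_add_cancel]
  exact hs_eq ▸ Algebra.commute_of_mem_adjoin_singleton_of_commute hs₀ hz

end Module.End

theorem Matrix.GeneralLinearGroup.commute_of_commute_mul_unipotent {K ι : Type*} [Field K]
    [PerfectField K] [Fintype ι] [DecidableEq ι] {s u z : GL ι K}
    (hs : Module.End.IsSemisimple (Matrix.toLin' (s : Matrix ι ι K)))
    (hu : IsNilpotent ((u : Matrix ι ι K) - 1)) (hsu : Commute s u) (hz : Commute z (s * u)) :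
    Commute z s := by
  let e := Matrix.toLinAlgEquiv' (R := K) (n := ι)
  have hsu' : Commute (s : Matrix ι ι K) u := Commute.units_val_iff.mpr hsu
  have hnil : IsNilpotent ((s * u : Matrix ι ι K) - s) := by
    rw [← mul_sub_one]
    exact (hsu'.sub_right (Commute.one_right _)).isNilpotent_mul_left hu
  have key : Commute (e z) (e s) :=
    Module.End.commute_of_isSemisimple_of_isNilpotent_sub (f := e (s * u : Matrix ι ι K)) hs
      (((Commute.refl _).mul_left hsu'.symm).map e) (by simpa using hnil.map e)
      ((Commute.units_val_iff.mpr hz).map e)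
  exact Commute.units_val_iff.mp (by simpa using key.map e.symm)

theorem commute_of_mem_Tsub {G : Subgroup (GL (Fin n) ℂ)} {s t z : GL (Fin n) ℂ}
    (ht : t ∈ Tsub n G s) (hzG : z ∈ G) (hzs : Commute z s) : Commute t z :=
  (connectedComponentIn_subset _ _ ht).2 z ⟨hzG, hzs⟩

theorem stmt3 (G : Subgroup (GL (Fin n) ℂ))
    (g g' s u s' u' : GL (Fin n) ℂ)
    -- Jordan decomposition of `g`
    (hg : g = s * u) (hcomm : s * u = u * s)
    (hss : IsSemisimpleElt n s) (hu : IsUnipotentElt n u)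
    -- Jordan decomposition of `g'`
    (hg' : g' = s' * u') (hcomm' : s' * u' = u' * s')
    (hss' : IsSemisimpleElt n s') (hu' : IsUnipotentElt n u')
    -- the hypotheses `g' g⁻¹ ∈ T_g` and `T_g = T_{g'}`
    (ht : g' * g⁻¹ ∈ Tsub n G s) (hTT : Tsub n G s = Tsub n G s') :
    {z : GL (Fin n) ℂ | z ∈ G ∧ z * g = g * z} =
      {z : GL (Fin n) ℂ | z ∈ G ∧ z * g' = g' * z} := by
  ext z
  constructor
  · rintro ⟨hzG, hz⟩
    have hzs : Commute z s :=
      Matrix.GeneralLinearGroup.commute_of_commute_mul_unipotent hss hu hcomm (hg ▸ hz)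
    refine ⟨hzG, show Commute z g' from ?_⟩
    simpa only [inv_mul_cancel_right] using (commute_of_mem_Tsub n ht hzG hzs).symm.mul_right hz
  · rintro ⟨hzG, hz⟩
    have hzs' : Commute z s' :=
      Matrix.GeneralLinearGroup.commute_of_commute_mul_unipotent hss' hu' hcomm' (hg' ▸ hz)
    refine ⟨hzG, show Commute z g from ?_⟩
    have ht' : Commute (g' * g⁻¹)⁻¹ z := (commute_of_mem_Tsub n (hTT ▸ ht) hzG hzs').inv_left
    simpa only [_root_.mul_inv_rev, inv_inv, inv_mul_cancel_right] using ht'.symm.mul_right hz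
end

section
/- Let E be a 2n-dimensional F₂-vector space with nondegenerate symplectic form, and let Z be the set of pairs (x, ȳ) with x ∈ E and ȳ ∈ E/F₂x. Define the matrix M indexed by Z × Z by M_{(x,ȳ),(x',ȳ')} = 0 if ⟨x,x'⟩ ≠ 0 and M_{(x,ȳ),(x',ȳ')} = 2^{-2n+2}(-1)^{⟨x',y⟩+⟨x,y'⟩}(δ_{x,0}+1)⁻¹(δ_{x',0}+1)⁻¹ if ⟨x,x'⟩ = 0, where y, y' are representatives of ȳ, ȳ'. Then M² is block-diagonal with blocks indexed by x ∈ E, and the block for x equals (2-δ_{x,0})(2I - |E/F₂x|⁻¹ J), where J is the all-ones matrix indexed by E/F₂x. -/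
/-!
Summing over representatives `w` of `E/F₂z` instead of over classes costs a factor `|F₂z|⁻¹`,
and the `w`-sum in an entry of `M²` is the character sum `∑_w (-1)^⟨x + x', w⟩`, which
vanishes unless `x = x'` by nondegeneracy: this is block-diagonality. On a diagonal block,
writing `[⟨x, z⟩ = 0] = (1 + (-1)^⟨x, z⟩)/2` splits the `z`-sum into two more character sums,
which detect `y = y'` and `y = y' + x`, i.e. `ȳ = ȳ'` in `E/F₂x`. The weight
`|F₂z|⁻¹ (δ_{z,0} + 1)⁻² = 1/2 - δ_{z,0}/4` contributes the multiple of `J`.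
-/

open scoped Classical

/-- `δ_{x,0}` as a real number. -/
noncomputable def del {E : Type*} [Zero E] (x : E) : ℝ := if x = 0 then 1 else 0

noncomputable def signChar : AddChar (ZMod 2) ℝ where
  toFun a := (-1) ^ a.val
  map_zero_eq_one' := by simp
  map_add_eq_mul' a b := by
    rw [ZMod.val_add, ← pow_add, neg_one_pow_eq_pow_mod_two (n := a.val + b.val)]

lemma signChar_apply (a : ZMod 2) : signChar a = (-1) ^ a.val := rfl

lemma signChar_one : signChar 1 = -1 := by simp [signChar_apply, ZMod.val_one]

lemma signChar_eq_one_iff {a : ZMod 2} : signChar a = 1 ↔ a = 0 := by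
  obtain rfl | rfl : a = 0 ∨ a = 1 := by decide +revert
  · simp
  · norm_num [signChar_one]

lemma ite_eq_zero_eq_signChar (a : ZMod 2) :
    (if a = 0 then 1 else 0 : ℝ) = (1 + signChar a) / 2 := by
  obtain rfl | rfl : a = 0 ∨ a = 1 := by decide +revert
  · norm_num
  · norm_num [signChar_one]

lemma sum_signChar_apply {E : Type*} [AddCommGroup E] [Module (ZMod 2) E] [Fintype E]
    (f : E →ₗ[ZMod 2] ZMod 2) :
    ∑ w, signChar (f w) = if f = 0 then (Fintype.card E : ℝ) else 0 := by
  have hf : signChar.compAddMonoidHom f.toAddMonoidHom = 0 ↔ f = 0 := by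
    simp [signChar_eq_one_iff, LinearMap.ext_iff, AddChar.eq_zero_iff]
  simpa [hf] using (signChar.compAddMonoidHom f.toAddMonoidHom).sum_eq_ite

lemma sum_mk_eq_card_smul_sum {R M β : Type*} [Ring R] [AddCommGroup M] [Module R M] [Fintype M]
    [AddCommMonoid β] (p : Submodule R M) [Fintype (M ⧸ p)] (f : M ⧸ p → β) :
    ∑ w, f (Submodule.Quotient.mk w) = Nat.card p • ∑ b, f b := by
  rw [← Finset.sum_fiberwise' Finset.univ (fun w : M => (Submodule.Quotient.mk w : M ⧸ p)) f,
    Finset.smul_sum]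
  refine Finset.sum_congr rfl fun b _ => ?_
  rw [Finset.sum_const]
  congr 1
  obtain ⟨b, rfl⟩ := Submodule.Quotient.mk_surjective p b
  rw [← Fintype.card_subtype, ← Nat.card_eq_fintype_card]
  exact Nat.card_congr ((Equiv.subtypeEquivRight fun w => Submodule.Quotient.eq p).trans
    (Equiv.subtypeEquiv (Equiv.subRight b) fun w => Iff.rfl))

lemma finsum_sigma_quotient {R E ι K : Type*} [Ring R] [AddCommGroup E] [Module R E]
    [Fintype E] [Fintype ι] [DivisionRing K] [CharZero K] (p : ι → Submodule R E)
    (f : (Σ i, E ⧸ p i) → K) :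
    ∑ᶠ z, f z = ∑ i, (Nat.card (p i) : K)⁻¹ * ∑ w, f ⟨i, Submodule.Quotient.mk w⟩ := by
  rw [finsum_eq_sum_of_fintype, Fintype.sum_sigma]
  refine Finset.sum_congr rfl fun i _ => ?_
  rw [sum_mk_eq_card_smul_sum (p i) fun b => f ⟨i, b⟩, nsmul_eq_mul, inv_mul_cancel_left₀]
  exact_mod_cast Nat.card_pos.ne'

section ZModTwo

variable {E : Type*} [AddCommGroup E] [Module (ZMod 2) E]

open Submodule

lemma mem_span_singleton_zmod_two {x u : E} : u ∈ span (ZMod 2) {x} ↔ u = 0 ∨ u = x := by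
  rw [mem_span_singleton]
  constructor
  · rintro ⟨a, rfl⟩
    obtain rfl | rfl : a = 0 ∨ a = 1 := by decide +revert
    all_goals simp
  · rintro (rfl | rfl)
    · exact ⟨0, zero_smul _ _⟩
    · exact ⟨1, one_smul _ _⟩

lemma card_span_singleton_zmod_two (x : E) : (Nat.card (span (ZMod 2) {x}) : ℝ) = 2 - del x := by
  unfold del
  split_ifs with hx
  · norm_num [hx]
  · rw [← Nat.card_congr (LinearEquiv.toSpanNonzeroSingleton (ZMod 2) E x hx).toEquiv,
      Nat.card_zmod]
    norm_num

lemma card_quotient_span_singleton_zmod_two [Finite E] (x : E) :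
    (Nat.card (E ⧸ span (ZMod 2) {x}) : ℝ) = Nat.card E / (2 - del x) := by
  have hdel : del x ≤ 1 := by unfold del; split_ifs <;> norm_num
  rw [card_eq_card_quotient_mul_card (span (ZMod 2) {x}), Nat.cast_mul,
    card_span_singleton_zmod_two, mul_div_cancel_left₀ _ (by linarith)]

lemma ite_add_ite_eq_mul_ite_mk_eq (x y y' : E) :
    ((if y = y' then 1 else 0) + (if x + y = y' then 1 else 0) : ℝ) =
      (1 + del x) *
        if (Submodule.Quotient.mk y : E ⧸ span (ZMod 2) {x}) = Submodule.Quotient.mk y' then 1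
        else 0 := by
  have hx : x + y = y' ↔ y - y' = x := by
    rw [ZModModule.sub_eq_add]
    constructor <;> rintro rfl
    · rw [add_left_comm, ZModModule.add_self, add_zero]
    · rw [add_comm y, add_assoc, ZModModule.add_self, add_zero]
  rw [Submodule.Quotient.eq, mem_span_singleton_zmod_two, sub_eq_zero, ← hx]
  unfold del
  by_cases h0 : x = 0
  · subst h0
    simp only [zero_add, or_self]
    split_ifs <;> norm_num
  · split_ifs <;> simp_all

end ZModTwo

section Form

variable {E : Type*} [AddCommGroup E] [Module (ZMod 2) E] [Fintype E]
  {B : E →ₗ[ZMod 2] E →ₗ[ZMod 2] ZMod 2}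

lemma sum_signChar_mul_signChar (hB : ∀ x, (∀ y, B x y = 0) → x = 0) (v v' : E) :
    ∑ w, signChar (B v w) * signChar (B v' w) = if v = v' then (Fintype.card E : ℝ) else 0 := by
  simp_rw [← AddChar.map_add_eq_mul, ← LinearMap.add_apply, ← map_add]
  have hBv : B (v + v') = 0 ↔ v = v' := by
    rw [← sub_eq_zero (a := v), ZModModule.sub_eq_add]
    exact ⟨fun h => hB _ fun w => by simp [h], fun h => by rw [h, map_zero]⟩
  rw [sum_signChar_apply, if_congr hBv rfl rfl]

lemma sum_ite_mul_signChar_mul_signChar (hB : ∀ x, (∀ y, B x y = 0) → x = 0) (x v v' : E) :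
    ∑ w, (if B x w = 0 then 1 else 0) * (signChar (B v w) * signChar (B v' w)) =
      Fintype.card E / 2 * ((if v = v' then 1 else 0) + (if x + v = v' then 1 else 0)) := by
  have h : ∀ w, (if B x w = 0 then 1 else 0) * (signChar (B v w) * signChar (B v' w)) =
      (signChar (B v w) * signChar (B v' w) + signChar (B (x + v) w) * signChar (B v' w)) / 2 := by
    intro w
    rw [ite_eq_zero_eq_signChar, map_add, LinearMap.add_apply, AddChar.map_add_eq_mul]
    ring
  simp_rw [h, ← Finset.sum_div, Finset.sum_add_distrib, sum_signChar_mul_signChar hB]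
  split_ifs <;> ring

end Form

section Fourier

open Submodule

variable {E : Type*} [AddCommGroup E] [Module (ZMod 2) E]
  {B : E →ₗ[ZMod 2] E →ₗ[ZMod 2] ZMod 2}
  {M : (Σ x : E, E ⧸ span (ZMod 2) {x}) → (Σ x : E, E ⧸ span (ZMod 2) {x}) → ℝ}

lemma entry_mk_mk_eq (c : ℝ)
    (hM0 : ∀ (x x' y y' : E), B x x' ≠ 0 →
      M ⟨x, Submodule.Quotient.mk y⟩ ⟨x', Submodule.Quotient.mk y'⟩ = 0)
    (hM1 : ∀ (x x' y y' : E), B x x' = 0 →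
      M ⟨x, Submodule.Quotient.mk y⟩ ⟨x', Submodule.Quotient.mk y'⟩ =
        c * (-1 : ℝ) ^ ((B x' y).val + (B x y').val) * (del x + 1)⁻¹ * (del x' + 1)⁻¹)
    (x x' y y' : E) :
    M ⟨x, Submodule.Quotient.mk y⟩ ⟨x', Submodule.Quotient.mk y'⟩ =
      c * (if B x x' = 0 then 1 else 0) * (signChar (B x' y) * signChar (B x y')) *
        (del x + 1)⁻¹ * (del x' + 1)⁻¹ := by
  by_cases h : B x x' = 0
  · rw [hM1 x x' y y' h, if_pos h, signChar_apply, signChar_apply, pow_add]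
    ring
  · rw [hM0 x x' y y' h, if_neg h]
    ring

lemma finsum_entry_mul_entry [Fintype E] (hB : ∀ x, (∀ y, B x y = 0) → x = 0)
    (halt : ∀ x, B x x = 0) (c : ℝ)
    (hM : ∀ x x' y y' : E, M ⟨x, Submodule.Quotient.mk y⟩ ⟨x', Submodule.Quotient.mk y'⟩ =
      c * (if B x x' = 0 then 1 else 0) * (signChar (B x' y) * signChar (B x y')) *
        (del x + 1)⁻¹ * (del x' + 1)⁻¹)
    (x x' y y' : E) :
    ∑ᶠ z, M ⟨x, Submodule.Quotient.mk y⟩ z * M z ⟨x', Submodule.Quotient.mk y'⟩ =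
      if x = x' then
        c ^ 2 * Fintype.card E * ((del x + 1)⁻¹) ^ 2 *
          (Fintype.card E / 4 * ((if y = y' then 1 else 0) + (if x + y = y' then 1 else 0)) - 1 / 4)
      else 0 := by
  have hsym (a b : E) : B a b = B b a := by
    rw [← LinearMap.IsAlt.neg halt, ZMod.neg_eq_self_mod_two]
  have hfiber (z : E) : ∑ w, M ⟨x, Submodule.Quotient.mk y⟩ ⟨z, Submodule.Quotient.mk w⟩ *
      M ⟨z, Submodule.Quotient.mk w⟩ ⟨x', Submodule.Quotient.mk y'⟩ =
      c ^ 2 * (del x + 1)⁻¹ * (del x' + 1)⁻¹ * ((del z + 1)⁻¹) ^ 2 *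
        ((if B x z = 0 then 1 else 0) * (if B z x' = 0 then 1 else 0)) *
        (signChar (B y z) * signChar (B y' z)) *
        ∑ w, signChar (B x w) * signChar (B x' w) := by
    rw [Finset.mul_sum]
    refine Finset.sum_congr rfl fun w _ => ?_
    rw [hM, hM, hsym z y, hsym z y']
    ring
  rw [finsum_sigma_quotient]
  simp_rw [hfiber, sum_signChar_mul_signChar hB]
  rcases eq_or_ne x x' with rfl | hx
  swap
  · simp [hx]
  simp only [if_true]
  have hterm (z : E) : (Nat.card (span (ZMod 2) {z}) : ℝ)⁻¹ *
      (c ^ 2 * (del x + 1)⁻¹ * (del x + 1)⁻¹ * ((del z + 1)⁻¹) ^ 2 *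
        ((if B x z = 0 then 1 else 0) * (if B z x = 0 then 1 else 0)) *
        (signChar (B y z) * signChar (B y' z)) * Fintype.card E) =
      c ^ 2 * Fintype.card E * ((del x + 1)⁻¹) ^ 2 * (1 / 2 * ((if B x z = 0 then 1 else 0) *
        (signChar (B y z) * signChar (B y' z))) - 1 / 4 * (if z = 0 then 1 else 0)) := by
    rw [card_span_singleton_zmod_two, hsym z x]
    by_cases hz : z = 0
    · subst hz
      simp only [del, map_zero, AddChar.map_zero_eq_one, if_true]
      ring
    · simp only [del, if_neg hz]
      split_ifs <;> ring
  rw [Finset.sum_congr rfl fun z _ => hterm z, ← Finset.mul_sum, Finset.sum_sub_distrib,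
    ← Finset.mul_sum, ← Finset.mul_sum, sum_ite_mul_signChar_mul_signChar hB,
    Finset.sum_ite_eq', if_pos (Finset.mem_univ _)]
  ring

end Fourier

theorem stmt7_general (n : ℕ)
    (E : Type*) [AddCommGroup E] [Module (ZMod 2) E] [Finite E]
    (hdim : Module.finrank (ZMod 2) E = 2 * n)
    (B : E →ₗ[ZMod 2] E →ₗ[ZMod 2] ZMod 2)
    (halt : ∀ x, B x x = 0)
    (hnondeg : ∀ x, (∀ y, B x y = 0) → x = 0)
    (M : (Σ x : E, E ⧸ Submodule.span (ZMod 2) {x}) →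
         (Σ x : E, E ⧸ Submodule.span (ZMod 2) {x}) → ℝ)
    (hM0 : ∀ (x x' y y' : E), B x x' ≠ 0 →
      M ⟨x, Submodule.Quotient.mk y⟩ ⟨x', Submodule.Quotient.mk y'⟩ = 0)
    (hM1 : ∀ (x x' y y' : E), B x x' = 0 →
      M ⟨x, Submodule.Quotient.mk y⟩ ⟨x', Submodule.Quotient.mk y'⟩ =
        (2 : ℝ) ^ (-(2 * n : ℤ) + 2) * (-1 : ℝ) ^ ((B x' y).val + (B x y').val) *
          (del x + 1)⁻¹ * (del x' + 1)⁻¹) :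
    (∀ (x x' : E), x ≠ x' →
      ∀ (yb : E ⧸ Submodule.span (ZMod 2) {x}) (ybb : E ⧸ Submodule.span (ZMod 2) {x'}),
        ∑ᶠ z : (Σ x : E, E ⧸ Submodule.span (ZMod 2) {x}),
          M ⟨x, yb⟩ z * M z ⟨x', ybb⟩ = 0) ∧
    (∀ (x : E) (yb ybb : E ⧸ Submodule.span (ZMod 2) {x}),
      ∑ᶠ z : (Σ x : E, E ⧸ Submodule.span (ZMod 2) {x}),
        M ⟨x, yb⟩ z * M z ⟨x, ybb⟩ =
          (2 - del x) * (2 * (if yb = ybb then 1 else 0) -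
            ((Nat.card (E ⧸ Submodule.span (ZMod 2) {x}) : ℝ))⁻¹)) := by
  have : Fintype E := Fintype.ofFinite E
  have hcard : (Fintype.card E : ℝ) = 2 ^ (2 * n) := by
    rw [Module.card_eq_pow_finrank (K := ZMod 2), ZMod.card, hdim, Nat.cast_pow, Nat.cast_ofNat]
  have hc : (2 : ℝ) ^ (-(2 * n : ℤ) + 2) = 4 / Fintype.card E := by
    rw [zpow_add₀ two_ne_zero, zpow_neg, hcard]
    norm_cast
    ring
  have key := finsum_entry_mul_entry hnondeg halt _ (entry_mk_mk_eq _ hM0 hM1)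
  refine ⟨fun x x' hxx' yb ybb => ?_, fun x yb ybb => ?_⟩ <;>
    obtain ⟨y, rfl⟩ := Submodule.Quotient.mk_surjective _ yb <;>
    obtain ⟨y', rfl⟩ := Submodule.Quotient.mk_surjective _ ybb
  · rw [key, if_neg hxx']
  · have hE : (Fintype.card E : ℝ) ≠ 0 := Nat.cast_ne_zero.mpr Fintype.card_ne_zero
    rw [key, if_pos rfl, ite_add_ite_eq_mul_ite_mk_eq, card_quotient_span_singleton_zmod_two,
      Nat.card_eq_fintype_card, hc]
    unfold del
    split_ifs <;> field_simp <;> ring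

/-- Fourier matrix of the Heisenberg example: `M²` is block diagonal with blocks
indexed by `x ∈ E`, the block at `x` being `(2-δ_{x,0})(2·I - |E/F₂x|⁻¹·J)`. -/
theorem stmt7 (n : ℕ) (hn : 1 ≤ n)
    (E : Type*) [AddCommGroup E] [Module (ZMod 2) E] [Finite E]
    (hdim : Module.finrank (ZMod 2) E = 2 * n)
    (B : E →ₗ[ZMod 2] E →ₗ[ZMod 2] ZMod 2)
    (halt : ∀ x, B x x = 0)
    (hnondeg : ∀ x, (∀ y, B x y = 0) → x = 0)
    (M : (Σ x : E, E ⧸ Submodule.span (ZMod 2) {x}) →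
         (Σ x : E, E ⧸ Submodule.span (ZMod 2) {x}) → ℝ)
    (hM0 : ∀ (x x' y y' : E), B x x' ≠ 0 →
      M ⟨x, Submodule.Quotient.mk y⟩ ⟨x', Submodule.Quotient.mk y'⟩ = 0)
    (hM1 : ∀ (x x' y y' : E), B x x' = 0 →
      M ⟨x, Submodule.Quotient.mk y⟩ ⟨x', Submodule.Quotient.mk y'⟩ =
        (2 : ℝ) ^ (-(2 * n : ℤ) + 2) * (-1 : ℝ) ^ ((B x' y).val + (B x y').val) *
          (del x + 1)⁻¹ * (del x' + 1)⁻¹) :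
    (∀ (x x' : E), x ≠ x' →
      ∀ (yb : E ⧸ Submodule.span (ZMod 2) {x}) (ybb : E ⧸ Submodule.span (ZMod 2) {x'}),
        ∑ᶠ z : (Σ x : E, E ⧸ Submodule.span (ZMod 2) {x}),
          M ⟨x, yb⟩ z * M z ⟨x', ybb⟩ = 0) ∧
    (∀ (x : E) (yb ybb : E ⧸ Submodule.span (ZMod 2) {x}),
      ∑ᶠ z : (Σ x : E, E ⧸ Submodule.span (ZMod 2) {x}),
        M ⟨x, yb⟩ z * M z ⟨x, ybb⟩ =
          (2 - del x) * (2 * (if yb = ybb then 1 else 0) -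
            ((Nat.card (E ⧸ Submodule.span (ZMod 2) {x}) : ℝ))⁻¹)) :=
  stmt7_general n E hdim B halt hnondeg M hM0 hM1
end

section
/- With H as above (H⁰ ≅ ℂ*, H¹ = r H⁰ with r g_λ r⁻¹ = g_{λ⁻¹}), the set A_{r,r} = {z ∈ H : z r z⁻¹ commutes with r} equals {1, g_{-1}, r, r g_{-1}, g_i, g_{-i}, r g_i, r g_{-i}}, where i is a square root of -1. -/
lemma c4 (x : ℂ) (hx : x ^ 4 = 1) :
    x = 1 ∨ x = -1 ∨ x = Complex.I ∨ x = -Complex.I := by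
  have h0 : (x - 1) * (x + 1) * (x - Complex.I) * (x + Complex.I) = 0 := by
    linear_combination hx + (1 - x ^ 2) * Complex.I_sq
  rcases mul_eq_zero.1 h0 with h | h
  · rcases mul_eq_zero.1 h with h | h
    · rcases mul_eq_zero.1 h with h | h
      · exact Or.inl (sub_eq_zero.1 h)
      · exact Or.inr (Or.inl (eq_neg_of_add_eq_zero_left h))
    · exact Or.inr (Or.inr (Or.inl (sub_eq_zero.1 h)))
  · exact Or.inr (Or.inr (Or.inr (eq_neg_of_add_eq_zero_left h)))

/-- With `H = H⁰ ⊔ H¹`, `H⁰ ≅ ℂ*` via `λ ↦ g λ`, and `r ∉ H⁰` inverting `H⁰` by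
conjugation (so `r² ∈ {1, g(-1)}`), the set
`A_{r,r} = {z ∈ H : z r z⁻¹ commutes with r}` equals
`{1, g(-1), r, r g(-1), g(i), g(-i), r g(i), r g(-i)}` where `i = √-1`. -/
theorem stmt13 (H : Type*) [Group H] (g : ℂˣ →* H)
    (hinj : Function.Injective g)
    (hindex : (MonoidHom.range g).index = 2)
    (hconj : ∀ h : H, h ∉ MonoidHom.range g → ∀ lam : ℂˣ, h * g lam * h⁻¹ = g lam⁻¹)
    (r : H) (hr : r ∉ MonoidHom.range g)
    (hr2 : r ^ 2 = 1 ∨ r ^ 2 = g (-1))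
    (i : ℂˣ) (hi : (i : ℂ) = Complex.I) :
    {z : H | (z * r * z⁻¹) * r = r * (z * r * z⁻¹)} =
      {1, g (-1), r, r * g (-1), g i, g (-i), r * g i, r * g (-i)} := by
  have key : ∀ lam : ℂˣ, g lam * r = r * g lam⁻¹ := by
    intro lam
    have h := hconj r hr lam⁻¹
    rw [inv_inv] at h
    rw [← h]; group
  -- fourth roots of unity in ℂˣ
  have hl4 : ∀ lam : ℂˣ, lam ^ 4 = 1 ↔
      (lam = 1 ∨ lam = -1 ∨ lam = i ∨ lam = -i) := by
    intro lam
    constructor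
    · intro h
      have hc : (lam : ℂ) ^ 4 = 1 := by
        have := congrArg Units.val h
        push_cast at this
        exact this
      rcases c4 _ hc with h1 | h1 | h1 | h1
      · exact Or.inl (Units.ext (by simpa using h1))
      · exact Or.inr (Or.inl (Units.ext (by simpa using h1)))
      · exact Or.inr (Or.inr (Or.inl (Units.ext (by rw [hi]; exact h1))))
      · refine Or.inr (Or.inr (Or.inr (Units.ext ?_)))
        simpa [hi] using h1
    · have hI4 : i ^ 4 = 1 := by
        apply Units.ext
        push_cast
        rw [hi]
        linear_combination (Complex.I ^ 2 - 1) * Complex.I_sq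
      rintro (h | h | h | h) <;> subst h
      · exact one_pow 4
      · rw [Even.neg_pow (by decide : Even 4), one_pow]
      · exact hI4
      · rw [Even.neg_pow (by decide : Even 4)]; exact hI4
  -- commuting condition in the form r * g ν
  have condR : ∀ nu : ℂˣ, (r * g nu) * r = r * (r * g nu) ↔ nu⁻¹ = nu := by
    intro nu
    have e1 : r * g nu * r = r * r * g nu⁻¹ := by
      rw [mul_assoc, key nu]; group
    have e2 : r * (r * g nu) = r * r * g nu := by group
    rw [e1, e2]
    constructor
    · intro h; exact hinj (mul_left_cancel h)
    · intro h; rw [h]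
  have hmu : ∀ lam : ℂˣ, (lam⁻¹ * lam⁻¹)⁻¹ = lam⁻¹ * lam⁻¹ ↔ lam ^ 4 = 1 := by
    intro lam
    constructor
    · intro h
      have h2 : lam ^ 4 = (lam⁻¹ * lam⁻¹)⁻¹ * (lam⁻¹ * lam⁻¹)⁻¹ := by group
      rw [h2]
      nth_rewrite 2 [h]
      group
    · intro h
      have h2 : (lam⁻¹ * lam⁻¹)⁻¹ = lam ^ 4 * (lam⁻¹ * lam⁻¹) := by group
      rw [h2, h, one_mul]
  -- conjugates
  have hc1 : ∀ lam : ℂˣ, g lam * r * (g lam)⁻¹ = r * g (lam⁻¹ * lam⁻¹) := by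
    intro lam
    rw [key lam, map_mul, ← map_inv]
    group
  have hc2 : ∀ lam : ℂˣ, r * g lam * r * (r * g lam)⁻¹ = r * g ((lam⁻¹ * lam⁻¹)⁻¹) := by
    intro lam
    have h2 := hconj r hr (lam⁻¹ * lam⁻¹)
    calc r * g lam * r * (r * g lam)⁻¹
        = r * (g lam * r * (g lam)⁻¹) * r⁻¹ := by group
      _ = r * (r * g (lam⁻¹ * lam⁻¹)) * r⁻¹ := by rw [hc1 lam]
      _ = r * (r * g (lam⁻¹ * lam⁻¹) * r⁻¹) := by group
      _ = r * g ((lam⁻¹ * lam⁻¹)⁻¹) := by rw [h2]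
  -- impossibility of cross equalities
  have hne : ∀ a b : ℂˣ, r * g a ≠ g b := by
    intro a b h
    exact hr ⟨b * a⁻¹, by rw [map_mul, map_inv, ← h]; group⟩
  have hgg : ∀ a b : ℂˣ, g a = g b ↔ a = b := fun a b => ⟨fun h => hinj h, fun h => by rw [h]⟩
  have hrg : ∀ a b : ℂˣ, r * g a = r * g b ↔ a = b := by
    intro a b
    constructor
    · intro h; exact hinj (mul_left_cancel h)
    · intro h; rw [h]
  ext z
  simp only [Set.mem_setOf_eq, Set.mem_insert_iff, Set.mem_singleton_iff]
  have hdecomp : (∃ lam, z = g lam) ∨ (∃ lam, z = r * g lam) := by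
    by_cases hz : z ∈ MonoidHom.range g
    · obtain ⟨lam, hl⟩ := hz; exact Or.inl ⟨lam, hl.symm⟩
    · have hri : r⁻¹ ∉ MonoidHom.range g := fun h => hr (by simpa using (MonoidHom.range g).inv_mem h)
      have hm : r⁻¹ * z ∈ MonoidHom.range g := by
        rw [Subgroup.mul_mem_iff_of_index_two hindex]
        tauto
      obtain ⟨lam, hl⟩ := hm
      exact Or.inr ⟨lam, by rw [hl]; group⟩
  rcases hdecomp with ⟨lam, rfl⟩ | ⟨lam, rfl⟩
  · rw [show g lam * r * (g lam)⁻¹ * r = r * (g lam * r * (g lam)⁻¹) ↔ lam ^ 4 = 1 by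
      rw [hc1 lam, condR, hmu]]
    constructor
    · intro h
      rcases (hl4 lam).1 h with h1 | h1 | h1 | h1 <;> subst h1
      · exact Or.inl (map_one g)
      · exact Or.inr (Or.inl rfl)
      · exact Or.inr (Or.inr (Or.inr (Or.inr (Or.inl rfl))))
      · exact Or.inr (Or.inr (Or.inr (Or.inr (Or.inr (Or.inl rfl)))))
    · intro h
      apply (hl4 lam).2
      rcases h with h | h | h | h | h | h | h | h
      · exact Or.inl (hinj (by rw [h, map_one]))
      · exact Or.inr (Or.inl ((hgg _ _).1 h))
      · exact absurd h.symm (by simpa using hne 1 lam)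
      · exact absurd h.symm (hne _ _)
      · exact Or.inr (Or.inr (Or.inl ((hgg _ _).1 h)))
      · exact Or.inr (Or.inr (Or.inr ((hgg _ _).1 h)))
      · exact absurd h.symm (hne i lam)
      · exact absurd h.symm (hne (-i) lam)
  · rw [show r * g lam * r * (r * g lam)⁻¹ * r = r * (r * g lam * r * (r * g lam)⁻¹) ↔ lam ^ 4 = 1 by
      rw [hc2 lam, condR, inv_inv, eq_comm, hmu]]
    constructor
    · intro h
      rcases (hl4 lam).1 h with h1 | h1 | h1 | h1 <;> subst h1
      · exact Or.inr (Or.inr (Or.inl (by rw [map_one, mul_one])))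
      · exact Or.inr (Or.inr (Or.inr (Or.inl rfl)))
      · exact Or.inr (Or.inr (Or.inr (Or.inr (Or.inr (Or.inr (Or.inl rfl))))))
      · exact Or.inr (Or.inr (Or.inr (Or.inr (Or.inr (Or.inr (Or.inr rfl))))))
    · intro h
      apply (hl4 lam).2
      rcases h with h | h | h | h | h | h | h | h
      · exact absurd (by rw [h, map_one] : r * g lam = g 1) (hne _ _)
      · exact absurd h (hne _ _)
      · exact Or.inl ((hrg lam 1).1 (by rw [map_one, mul_one]; exact h))
      · exact Or.inr (Or.inl ((hrg _ _).1 h))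
      · exact absurd h (hne _ _)
      · exact absurd h (hne _ _)
      · exact Or.inr (Or.inr (Or.inl ((hrg _ _).1 h)))
      · exact Or.inr (Or.inr (Or.inr ((hrg _ _).1 h)))
end
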